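/- arXiv:1510.08892 — 2 statements merged into one kernel-verified Lean document; each statement's English description precedes it below -/
import Mathlib

section
/- Let G = (V,E) be a finite directed graph, let k ≥ 1, and let (L,R) be a partition of V. Let C = v_1 → v_2 → … → v_t → v_1 be a simple directed cycle in G with t > 2k, v_1, …, v_k ∈ L and v_{k+1}, …, v_{2k} ∈ R. Let P = u_1 → u_2 → … → u_m be a simple directed path in the induced subgraph G[L] from u_1 = v_1 to u_m = v_k with m < k, and suppose the vertex set V_P of P intersects {v_{k+1}, …, v_t, v_1} only in vertices of V_P. Then G contains a simple directed cycle on at least k and fewer than t vertices whose first k vertices (in cyclic order starting from v_{k+1}) lie in {v_{k+1}, …, v_{2k}} ⊆ R; in particular, G contains a simple directed cycle C' with k ≤ |C'| < t, with its initial k vertices v_{k+1}, …, v_{2k} in R followed by vertices of L. More precisely: letting v_i be the first vertex of the walk v_{k+1}, v_{k+2}, …, v_t, v_1 that belongs to V_P, the cycle obtained by following C from v_{k+1} to the predecessor of v_i and then following P from v_i to v_k and taking the edge (v_k, v_{k+1}) is a simple directed cycle on at least k and fewer than t vertices. -/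
/-- A simple directed cycle on `t` vertices in the directed graph with edge relation `E`. -/
def IsCycleOn {V : Type*} (E : V → V → Prop) (t : ℕ) (w : Fin t → V) : Prop :=
  Function.Injective w ∧ ∀ i : Fin t, E (w i) (w ⟨(i.val + 1) % t, Nat.mod_lt _ i.pos⟩)

/-- A simple directed path on `m` vertices. -/
def IsPathOn {V : Type*} (E : V → V → Prop) (m : ℕ) (w : Fin m → V) : Prop :=
  Function.Injective w ∧ ∀ (i : ℕ) (h : i + 1 < m),
    E (w ⟨i, Nat.lt_of_succ_lt h⟩) (w ⟨i + 1, h⟩)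

/-- Let `C = v_1 → ⋯ → v_t → v_1` be a simple cycle with `t > 2k`,
`v_1,…,v_k ∈ L`, `v_{k+1},…,v_{2k} ∈ R`, and let `P = u_1 → ⋯ → u_m` be a simple path in
`G[L]` from `u_1 = v_1` to `u_m = v_k` with `m < k` vertices. Let `v_i` be the first
vertex of the walk `v_{k+1}, v_{k+2}, …, v_t, v_1` that belongs to `V_P` (here `a₀` is
the 0-based position of `v_i` along this walk, so `v_i = C (k + a₀)` if `a₀ < t - k` and
`v_i = v_1 = C 0` if `a₀ = t - k`), and let `u_j` (`j` 0-based) be the vertex of `P` with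
`u_j = v_i`. Then the cycle obtained by following `C` from `v_{k+1}` to the predecessor
of `v_i`, then following `P` from `v_i` to `v_k`, and taking the edge `(v_k, v_{k+1})`,
is a simple directed cycle on at least `k` and fewer than `t` vertices, whose first `k`
vertices lie in `R`. (Vertices of `C` and `P` are 0-indexed.) -/
theorem shortcut_cycle_general {V : Type*} [Fintype V] [DecidableEq V]
    (E : V → V → Prop) (k : ℕ) (hk : 1 ≤ k)
    (L R : Set V) (hdisj : Disjoint L R) (hunion : L ∪ R = Set.univ)
    (t : ℕ) (ht : 2 * k < t) (C : Fin t → V) (hC : IsCycleOn E t C)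
    (hCL : ∀ i : Fin t, i.val < k → C i ∈ L)
    (hCR : ∀ i : Fin t, k ≤ i.val → i.val < 2 * k → C i ∈ R)
    (m : ℕ) (hm1 : 1 ≤ m) (hm : m < k)
    (P : Fin m → V) (hP : IsPathOn E m P) (hPL : Set.range P ⊆ L)
    (hPfirst : P ⟨0, by omega⟩ = C ⟨0, by omega⟩)
    (hPlast : P ⟨m - 1, by omega⟩ = C ⟨k - 1, by omega⟩)
    (a₀ : ℕ) (ha₀ : a₀ ≤ t - k)
    (vi : V) (hvi : vi = if h : k + a₀ < t then C ⟨k + a₀, h⟩ else C ⟨0, by omega⟩)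
    (hhit : vi ∈ Set.range P)
    (hfirst : ∀ a, a < a₀ → ∀ h : k + a < t, C ⟨k + a, h⟩ ∉ Set.range P)
    (j : Fin m) (hj : P j = vi) :
    k ≤ a₀ + (m - j.val) ∧ a₀ + (m - j.val) < t ∧
    IsCycleOn E (a₀ + (m - j.val)) (fun b =>
      if h : b.val < a₀ then C ⟨k + b.val, by omega⟩
      else P ⟨j.val + (b.val - a₀), by have h1 := b.isLt; have h2 := j.isLt; omega⟩) ∧
    (∀ b : Fin (a₀ + (m - j.val)), b.val < k →
      (fun b : Fin (a₀ + (m - j.val)) =>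
        if h : b.val < a₀ then C ⟨k + b.val, by omega⟩
        else P ⟨j.val + (b.val - a₀),
          by have h1 := b.isLt; have h2 := j.isLt; omega⟩) b ∈ R) := by
  obtain ⟨hCinj, hCedge⟩ := hC
  obtain ⟨hPinj, hPedge⟩ := hP
  have hjm : j.val < m := j.isLt
  -- helper: edges of C with arbitrary index proofs
  have hCE : ∀ (a : ℕ) (ha : a < t) (b : ℕ) (hb : b < t), b = (a + 1) % t →
      E (C ⟨a, ha⟩) (C ⟨b, hb⟩) := by
    intro a ha b hb hab
    have := hCedge ⟨a, ha⟩
    convert this using 2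
    exact Fin.ext hab
  have hPE : ∀ (a : ℕ) (ha : a < m) (b : ℕ) (hb : b < m), b = a + 1 →
      E (P ⟨a, ha⟩) (P ⟨b, hb⟩) := by
    intro a ha b hb hab
    subst hab
    exact hPedge a hb
  -- a₀ ≥ k
  have hak : k ≤ a₀ := by
    by_contra hcon
    push_neg at hcon
    have h1 : k + a₀ < t := by omega
    rw [dif_pos h1] at hvi
    have hR : C ⟨k + a₀, h1⟩ ∈ R := hCR ⟨k + a₀, h1⟩ (by simp) (by simp; omega)
    have hL : vi ∈ L := hPL hhit
    rw [hvi] at hL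
    exact Set.disjoint_left.mp hdisj hL hR
  have hmj : 1 ≤ m - j.val := by omega
  refine ⟨by omega, by omega, ⟨?_, ?_⟩, ?_⟩
  · -- injectivity
    intro b1 b2 heq
    dsimp only at heq
    have hb1 := b1.isLt
    have hb2 := b2.isLt
    split_ifs at heq with h1 h2 h2
    · have h3 := hCinj heq
      rw [Fin.mk.injEq] at h3
      exact Fin.ext (by omega)
    · exact absurd ⟨_, heq.symm⟩ (hfirst b1.val h1 (by omega))
    · exact absurd ⟨_, heq⟩ (hfirst b2.val h2 (by omega))
    · have h3 := hPinj heq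
      rw [Fin.mk.injEq] at h3
      exact Fin.ext (by omega)
  · -- edges
    intro i
    dsimp only
    have hi := i.isLt
    have hn : 0 < a₀ + (m - j.val) := i.pos
    by_cases hlast : i.val + 1 = a₀ + (m - j.val)
    · -- wrap-around edge: P (m-1) = C (k-1) → C k = w 0
      have hmod : (i.val + 1) % (a₀ + (m - j.val)) = 0 := by
        rw [hlast]; exact Nat.mod_self _
      rw [dif_neg (show ¬ i.val < a₀ by omega), dif_pos (show (i.val + 1) % (a₀ + (m - j.val)) < a₀ by omega)]
      have heq1 : (⟨j.val + (i.val - a₀), by omega⟩ : Fin m) = ⟨m - 1, by omega⟩ :=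
        Fin.ext (by simp; omega)
      rw [heq1, hPlast]
      apply hCE
      have h2 : (k - 1 + 1) % t = k := by
        rw [show k - 1 + 1 = k by omega]; exact Nat.mod_eq_of_lt (by omega)
      omega
    · have hmod : (i.val + 1) % (a₀ + (m - j.val)) = i.val + 1 :=
        Nat.mod_eq_of_lt (by omega)
      by_cases h1 : i.val + 1 < a₀
      · -- both in C part
        rw [dif_pos (show i.val < a₀ by omega), dif_pos (show (i.val + 1) % (a₀ + (m - j.val)) < a₀ by omega)]
        apply hCE
        have h2 : (k + i.val + 1) % t = k + i.val + 1 := Nat.mod_eq_of_lt (by omega)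
        omega
      · by_cases h2 : i.val + 1 = a₀
        · -- C part to P j = vi
          rw [dif_pos (show i.val < a₀ by omega), dif_neg (show ¬ (i.val + 1) % (a₀ + (m - j.val)) < a₀ by omega)]
          have heq1 : (⟨j.val + ((i.val + 1) % (a₀ + (m - j.val)) - a₀), by omega⟩ : Fin m) = j :=
            Fin.ext (by simp; omega)
          rw [heq1, hj, hvi]
          by_cases h3 : k + a₀ < t
          · rw [dif_pos h3]
            apply hCE
            have h4 : (k + i.val + 1) % t = k + i.val + 1 := Nat.mod_eq_of_lt (by omega)
            omega
          · rw [dif_neg h3]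
            apply hCE
            have h4 : k + i.val + 1 = t := by omega
            have h5 : (k + i.val + 1) % t = 0 := by rw [h4]; exact Nat.mod_self _
            omega
        · -- both in P part
          rw [dif_neg (show ¬ i.val < a₀ by omega), dif_neg (show ¬ (i.val + 1) % (a₀ + (m - j.val)) < a₀ by omega)]
          apply hPE
          omega
  · -- first k vertices in R
    intro b hb
    dsimp only
    rw [dif_pos (show b.val < a₀ by omega)]
    exact hCR ⟨k + b.val, by omega⟩ (by simp) (by simp; omega)
end

section
/- Let G = (V,E) be a finite directed graph, let k ≥ 1, and let (L,R) be a partition of V. Let C = v_1 → v_2 → … → v_t → v_1 be a simple directed cycle in G with t > 2k, v_1, …, v_k ∈ L and v_{k+1}, …, v_{2k} ∈ R. Let P = u_1 → u_2 → … → u_k be a simple directed path in the induced subgraph G[L] from u_1 = v_1 to u_k = v_k on exactly k vertices, and suppose the vertex set V_P of P intersects {v_{k+1}, …, v_t}. Then, letting v_i be the first vertex of the sequence v_{k+1}, v_{k+2}, …, v_t that belongs to V_P and j the index with v_i = u_j, the sequence v_{k+1} → v_{k+2} → … → v_{i-1} → u_j → u_{j+1} → … → u_k → v_{k+1} is a simple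 directed cycle in G on at least k and fewer than t vertices. -/
/-- Let `C = v_1 → ⋯ → v_t → v_1` be a simple cycle with `t > 2k`,
`v_1,…,v_k ∈ L`, `v_{k+1},…,v_{2k} ∈ R`, and let `P = u_1 → ⋯ → u_k` be a simple path in
`G[L]` from `u_1 = v_1` to `u_k = v_k` on exactly `k` vertices whose vertex set meets
`{v_{k+1},…,v_t}`. Let `v_i` be the first vertex of the sequence `v_{k+1},…,v_t`
belonging to `V_P` (here `a₀` is its 0-based position, so `v_i = C (k + a₀)` with
`a₀ < t - k`), and let `u_j = v_i` (`j` 0-based). Then the sequence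
`v_{k+1} → ⋯ → v_{i-1} → u_j → u_{j+1} → ⋯ → u_k → v_{k+1}` is a simple directed cycle
in `G` on at least `k` and fewer than `t` vertices.
(Vertices of `C` and `P` are 0-indexed.) -/
theorem shortcut_cycle_exact {V : Type*} [Fintype V] [DecidableEq V]
    (E : V → V → Prop) (k : ℕ) (hk : 1 ≤ k)
    (L R : Set V) (hdisj : Disjoint L R) (hunion : L ∪ R = Set.univ)
    (t : ℕ) (ht : 2 * k < t) (C : Fin t → V) (hC : IsCycleOn E t C)
    (hCL : ∀ i : Fin t, i.val < k → C i ∈ L)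
    (hCR : ∀ i : Fin t, k ≤ i.val → i.val < 2 * k → C i ∈ R)
    (P : Fin k → V) (hP : IsPathOn E k P) (hPL : Set.range P ⊆ L)
    (hPfirst : P ⟨0, by omega⟩ = C ⟨0, by omega⟩)
    (hPlast : P ⟨k - 1, by omega⟩ = C ⟨k - 1, by omega⟩)
    (a₀ : ℕ) (ha₀ : a₀ < t - k)
    (hhit : C ⟨k + a₀, by omega⟩ ∈ Set.range P)
    (hfirst : ∀ a, a < a₀ → ∀ h : k + a < t, C ⟨k + a, h⟩ ∉ Set.range P)
    (j : Fin k) (hj : P j = C ⟨k + a₀, by omega⟩) :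
    k ≤ a₀ + (k - j.val) ∧ a₀ + (k - j.val) < t ∧
    IsCycleOn E (a₀ + (k - j.val)) (fun b =>
      if h : b.val < a₀ then C ⟨k + b.val, by omega⟩
      else P ⟨j.val + (b.val - a₀),
        by have h1 := b.isLt; have h2 := j.isLt; omega⟩) := by
  obtain ⟨hCinj, hCedge⟩ := hC
  obtain ⟨hPinj, hPedge⟩ := hP
  have hjk := j.isLt
  have hka₀ : k ≤ a₀ := by
    by_contra hcon
    push_neg at hcon
    have hR : C ⟨k + a₀, by omega⟩ ∈ R :=
      hCR ⟨k + a₀, by omega⟩ (Nat.le_add_right k a₀) (by omega : k + a₀ < 2 * k)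
    have hL : C ⟨k + a₀, by omega⟩ ∈ L := hPL hhit
    exact Set.disjoint_left.mp hdisj hL hR
  have hkey : ∀ (x y : ℕ) (hx : x < t) (hy : y < t), (x + 1) % t = y →
      E (C ⟨x, hx⟩) (C ⟨y, hy⟩) := by
    intro x y hx hy hxy
    have h := hCedge ⟨x, hx⟩
    convert h using 2
    exact Fin.ext hxy.symm
  have hkeyP : ∀ (x y : ℕ) (hx : x < k) (hy : y < k), x + 1 = y →
      E (P ⟨x, hx⟩) (P ⟨y, hy⟩) := by
    intro x y hx hy hxy
    subst hxy
    exact hPedge x hy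
  refine ⟨by omega, by omega, ?_, ?_⟩
  · intro b b' hbb'
    simp only at hbb'
    by_cases hb : b.val < a₀ <;> by_cases hb' : b'.val < a₀
    · rw [dif_pos hb, dif_pos hb'] at hbb'
      have h2 := hCinj hbb'
      rw [Fin.mk.injEq] at h2
      exact Fin.ext (by omega)
    · rw [dif_pos hb, dif_neg hb'] at hbb'
      exact absurd ⟨_, hbb'.symm⟩ (hfirst b.val hb (by omega))
    · rw [dif_neg hb, dif_pos hb'] at hbb'
      exact absurd ⟨_, hbb'⟩ (hfirst b'.val hb' (by omega))
    · rw [dif_neg hb, dif_neg hb'] at hbb'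
      have h2 := hPinj hbb'
      rw [Fin.mk.injEq] at h2
      have hbv := b.isLt
      have hbv' := b'.isLt
      exact Fin.ext (by omega)
  · intro i
    have hi := i.isLt
    simp only
    by_cases hlast : i.val + 1 = a₀ + (k - j.val)
    · have hm : (i.val + 1) % (a₀ + (k - j.val)) = 0 := by
        rw [hlast]; exact Nat.mod_self _
      simp only [hm]
      rw [dif_neg (show ¬ i.val < a₀ by omega), dif_pos (show (0:ℕ) < a₀ by omega)]
      rw [show (⟨j.val + (i.val - a₀), by omega⟩ : Fin k) = ⟨k - 1, by omega⟩ from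
        Fin.ext (by show j.val + (i.val - a₀) = k - 1; omega), hPlast]
      exact hkey (k - 1) (k + 0) (by omega) (by omega)
        (by rw [Nat.sub_add_cancel hk]; exact Nat.mod_eq_of_lt (by omega))
    · have hm : (i.val + 1) % (a₀ + (k - j.val)) = i.val + 1 :=
        Nat.mod_eq_of_lt (by omega)
      simp only [hm]
      rcases lt_trichotomy (i.val + 1) a₀ with h1 | h1 | h1
      · rw [dif_pos (show i.val < a₀ by omega), dif_pos h1]
        exact hkey (k + i.val) (k + (i.val + 1)) (by omega) (by omega)
          (by rw [Nat.mod_eq_of_lt (by omega)]; omega)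
      · rw [dif_pos (show i.val < a₀ by omega), dif_neg (show ¬ i.val + 1 < a₀ by omega)]
        rw [show (⟨j.val + (i.val + 1 - a₀), by omega⟩ : Fin k) = j from
          Fin.ext (by show j.val + (i.val + 1 - a₀) = j.val; omega), hj]
        exact hkey (k + i.val) (k + a₀) (by omega) (by omega)
          (by rw [Nat.mod_eq_of_lt (by omega)]; omega)
      · rw [dif_neg (show ¬ i.val < a₀ by omega), dif_neg (show ¬ i.val + 1 < a₀ by omega)]
        exact hkeyP (j.val + (i.val - a₀)) (j.val + (i.val + 1 - a₀)) (by omega) (by omega)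
          (by omega)
end
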